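/- Let K be a field, m a monomial order on X →₀ ℕ, φ : (X →₀ ℕ) →+ (X →₀ ℕ) an additive homomorphism compatible with m (m.toSyn d < m.toSyn e implies m.toSyn (φ d) < m.toSyn (φ e)), and σ : MvPolynomial X K →ₐ[K] MvPolynomial X K the K-algebra endomorphism with σ (monomial d c) = monomial (φ d) c for all d and c. Let I be an ideal of MvPolynomial X K with σ(I) ⊆ I (I is Σ-invariant). Then the leading-monomial ideal LM(I) := Ideal.span { monomial (m.degree f) 1 : f ∈ I, f ≠ 0 } is also Σ-invariant: σ h ∈ LM(I) for every h ∈ LM(I). -/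

import Mathlib

/-!
An exponent map `φ` that is strictly monotone for `m` is injective, so `σ` just relabels the
terms of `f` along `φ` without cancellation; monotonicity then makes `φ (m.degree f)` the largest
exponent of `σ f`. Hence `σ` sends the leading monomial of `f ∈ I` to that of `σ f ∈ I`, and the
generators of the leading-monomial ideal to generators.
-/

variable {X K : Type*} [Field K]

/-- The leading exponent (degree) of a multivariate polynomial with respect to
a monomial order `m`. -/
noncomputable def MonomialOrder.mvDegree (m : MonomialOrder X) (f : MvPolynomial X K) :
    X →₀ ℕ :=
  m.toSyn.symm (f.support.sup m.toSyn)

namespace MvPolynomial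

variable {ι R : Type*} [CommSemiring R] {φ : (ι →₀ ℕ) → (ι →₀ ℕ)}
  {F : Type*} [FunLike F (MvPolynomial ι R) (MvPolynomial ι R)]
  [AddMonoidHomClass F (MvPolynomial ι R) (MvPolynomial ι R)] {σ : F}

theorem coeff_apply_eq_zero_of_map_monomial (hσ : ∀ d c, σ (monomial d c) = monomial (φ d) c)
    (f : MvPolynomial ι R) {e : ι →₀ ℕ} (he : e ∉ Set.range φ) : (σ f).coeff e = 0 := by
  classical
  induction f using MvPolynomial.induction_on' with
  | monomial d c => rw [hσ, coeff_monomial, if_neg fun h => he ⟨d, h⟩]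
  | add p q hp hq => rw [map_add, coeff_add, hp, hq, add_zero]

theorem coeff_apply_eq_of_map_monomial (hσ : ∀ d c, σ (monomial d c) = monomial (φ d) c)
    (hφ : Function.Injective φ) (f : MvPolynomial ι R) (d : ι →₀ ℕ) :
    (σ f).coeff (φ d) = f.coeff d := by
  classical
  induction f using MvPolynomial.induction_on' with
  | monomial e c => simp only [hσ, coeff_monomial, hφ.eq_iff]
  | add p q hp hq => rw [map_add, coeff_add, coeff_add, hp, hq]

theorem apply_ne_zero_of_map_monomial (hσ : ∀ d c, σ (monomial d c) = monomial (φ d) c)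
    (hφ : Function.Injective φ) {f : MvPolynomial ι R} (hf : f ≠ 0) : σ f ≠ 0 := by
  obtain ⟨d, hd⟩ := ne_zero_iff.mp hf
  exact ne_zero_iff.mpr ⟨φ d, by rwa [coeff_apply_eq_of_map_monomial hσ hφ]⟩

theorem exists_mem_support_of_map_monomial (hσ : ∀ d c, σ (monomial d c) = monomial (φ d) c)
    (hφ : Function.Injective φ) {f : MvPolynomial ι R} {e : ι →₀ ℕ} (he : e ∈ (σ f).support) :
    ∃ d ∈ f.support, φ d = e := by
  rw [mem_support_iff] at he
  by_cases hrange : e ∈ Set.range φ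
  · obtain ⟨d, rfl⟩ := hrange
    exact ⟨d, by rwa [mem_support_iff, ← coeff_apply_eq_of_map_monomial hσ hφ], rfl⟩
  · exact absurd (coeff_apply_eq_zero_of_map_monomial hσ f hrange) he

end MvPolynomial

namespace MonomialOrder

variable (m : MonomialOrder X) {φ : (X →₀ ℕ) → (X →₀ ℕ)}

theorem mvDegree_eq_degree (f : MvPolynomial X K) : m.mvDegree f = m.degree f := rfl

theorem injective_of_strictMono (hφ : ∀ d e, d ≺[m] e → φ d ≺[m] φ e) :
    Function.Injective φ := by
  intro d e hde
  rcases lt_trichotomy (m.toSyn d) (m.toSyn e) with h | h | h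
  · exact absurd (congrArg m.toSyn hde) (hφ d e h).ne
  · exact m.toSyn.injective h
  · exact absurd (congrArg m.toSyn hde) (hφ e d h).ne'

theorem monotone_of_strictMono (hφ : ∀ d e, d ≺[m] e → φ d ≺[m] φ e) {d e : X →₀ ℕ}
    (h : d ≼[m] e) : φ d ≼[m] φ e := by
  rcases h.lt_or_eq with h | h
  · exact (hφ d e h).le
  · rw [m.toSyn.injective h]

theorem degree_apply_of_map_monomial {R : Type*} [CommSemiring R]
    {F : Type*} [FunLike F (MvPolynomial X R) (MvPolynomial X R)]
    [AddMonoidHomClass F (MvPolynomial X R) (MvPolynomial X R)] {σ : F}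
    (hσ : ∀ d c, σ (MvPolynomial.monomial d c) = MvPolynomial.monomial (φ d) c)
    (hφ : ∀ d e, d ≺[m] e → φ d ≺[m] φ e) {f : MvPolynomial X R} (hf : f ≠ 0) :
    m.degree (σ f) = φ (m.degree f) := by
  have hinj := m.injective_of_strictMono hφ
  refine m.toSyn.injective (le_antisymm (m.degree_le_iff.mpr ?_) (m.le_degree ?_))
  · intro e he
    obtain ⟨d, hd, rfl⟩ := MvPolynomial.exists_mem_support_of_map_monomial hσ hinj he
    exact m.monotone_of_strictMono hφ (m.le_degree hd)
  · rw [MvPolynomial.mem_support_iff, MvPolynomial.coeff_apply_eq_of_map_monomial hσ hinj]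
    exact m.coeff_degree_ne_zero_iff.mpr hf

end MonomialOrder

/-- **The leading-monomial ideal of a `Σ`-invariant ideal is `Σ`-invariant.**
If `σ` (with exponent map `φ` compatible with the monomial order `m`) satisfies `σ(I) ⊆ I`,
then the ideal generated by the leading monomials of the nonzero elements of `I` is closed
under `σ`. -/
theorem leadingMonomialIdeal_invariant (m : MonomialOrder X) (φ : (X →₀ ℕ) →+ (X →₀ ℕ))
    (hφ : ∀ d e : X →₀ ℕ, m.toSyn d < m.toSyn e → m.toSyn (φ d) < m.toSyn (φ e))
    (σ : MvPolynomial X K →ₐ[K] MvPolynomial X K)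
    (hσ : ∀ (d : X →₀ ℕ) (c : K), σ (MvPolynomial.monomial d c) = MvPolynomial.monomial (φ d) c)
    (I : Ideal (MvPolynomial X K)) (hI : ∀ f ∈ I, σ f ∈ I) :
    ∀ h ∈ Ideal.span {p : MvPolynomial X K |
        ∃ f ∈ I, f ≠ 0 ∧ p = MvPolynomial.monomial (m.mvDegree f) (1 : K)},
      σ h ∈ Ideal.span {p : MvPolynomial X K |
        ∃ f ∈ I, f ≠ 0 ∧ p = MvPolynomial.monomial (m.mvDegree f) (1 : K)} := by
  intro h hh
  refine Ideal.mem_comap.mp ((Ideal.span_le (I := Ideal.comap σ _)).mpr ?_ hh)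
  rintro _ ⟨f, hfI, hf, rfl⟩
  refine Ideal.subset_span ⟨σ f, hI f hfI,
    MvPolynomial.apply_ne_zero_of_map_monomial hσ (m.injective_of_strictMono hφ) hf, ?_⟩
  rw [hσ, m.mvDegree_eq_degree, m.mvDegree_eq_degree, m.degree_apply_of_map_monomial hσ hφ hf]
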